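/- Suppose s is a quasi-strictly proper scoring rule on 𝒞 that is continuous (where 𝒞 carries the topology of pointwise convergence and [-∞,M]^Ω the product of the order topology on [-∞,M]). Then either E_p s(p) = -∞ for some p ∈ 𝒫, or both of the following hold: (i) for every sequence (p_n) in 𝒫 converging to a probability function p (i.e., p_n({ω}) → p({ω}) for every ω) such that s(p_n) is finite for all n while s(p) is not finite, one has lim_n E_{p_n} s(p_n) = E_p s(p); and (ii) the set F = s[𝒫] ∩ ℝ^Ω of finite scores is dense in ∂⁺ Conv F. -/
import Mathlib


open Filter Topology

variable {Ω : Type*}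

/-- A probability function: nonnegative, finitely additive, total mass one. -/
def IsProbability [Fintype Ω] (p : Set Ω → ℝ) : Prop :=
  (∀ A, 0 ≤ p A) ∧ (∀ A B : Set Ω, Disjoint A B → p (A ∪ B) = p A + p B) ∧ p Set.univ = 1

/-- Expected value `E_p f = Σ_{ω, p({ω}) ≠ 0} p({ω}) f(ω)`.  Since `EReal`
multiplication satisfies `0 * a = a * 0 = 0` even for infinite `a`, the zero terms
contribute nothing and we may sum over all of `Ω`. -/
noncomputable def expScore [Fintype Ω] (p : Set Ω → ℝ) (f : Ω → EReal) : EReal :=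
  ∑ ω, (p {ω} : EReal) * f ω

/-- A score is finite when all of its values are finite. -/
def FiniteScore (f : Ω → EReal) : Prop := ∀ ω, f ω ≠ ⊥ ∧ f ω ≠ ⊤

/-- The set of finite scores `F = s[𝒫] ∩ ℝ^Ω`, viewed as a subset of `ℝ^Ω`. -/
def finScores [Fintype Ω] (s : (Set Ω → ℝ) → Ω → EReal) : Set (Ω → ℝ) :=
  {z | ∃ p, IsProbability p ∧ s p = fun ω => (z ω : EReal)}

/-- The positive-facing boundary `∂⁺ G`: boundary points of `G` at which `G` has a
normal vector with all components positive. -/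
def posFacing [Fintype Ω] (G : Set (Ω → ℝ)) : Set (Ω → ℝ) :=
  {z | z ∈ frontier G ∧ ∃ v : Ω → ℝ, (∀ ω, 0 < v ω) ∧
    ∀ w ∈ G, ∑ ω, v ω * w ω ≤ ∑ ω, v ω * z ω}

/-- `A` is dense in `B`: every open set meeting `B` meets `A`. -/
def DenseIn {X : Type*} [TopologicalSpace X] (A B : Set X) : Prop :=
  ∀ U : Set X, IsOpen U → (U ∩ B).Nonempty → (U ∩ A).Nonempty
set_option linter.unusedSectionVars false

section Aux
variable [Fintype Ω]

lemma IsProbability.empty' {p : Set Ω → ℝ} (hp : IsProbability p) : p ∅ = 0 := by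
  have h := hp.2.1 ∅ ∅ (by simp)
  simp only [Set.union_empty] at h
  linarith

lemma IsProbability.finset_sum {p : Set Ω → ℝ} (hp : IsProbability p) (S : Finset Ω) :
    p ↑S = ∑ ω ∈ S, p {ω} := by
  classical
  induction S using Finset.induction_on with
  | empty => simpa using hp.empty'
  | @insert a S ha ih =>
      have hd : Disjoint ({a} : Set Ω) (↑S : Set Ω) := by
        simp [Set.disjoint_singleton_left, ha]
      have := hp.2.1 {a} ↑S hd
      rw [Finset.coe_insert, Set.insert_eq, this, ih, Finset.sum_insert ha]

lemma IsProbability.eq_ite_sum {p : Set Ω → ℝ} (hp : IsProbability p) (A : Set Ω) :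
    p A = ∑ ω, A.indicator (fun ω => p {ω}) ω := by
  classical
  have hA : A = ↑(Finset.univ.filter (· ∈ A)) := by ext ω; simp
  rw [hA, hp.finset_sum]
  rw [Finset.sum_filter]
  refine Finset.sum_congr rfl fun ω _ => ?_
  by_cases h : ω ∈ A <;> simp [Set.indicator_apply, h, hA.symm ▸ h]

lemma IsProbability.sum_singleton {p : Set Ω → ℝ} (hp : IsProbability p) :
    ∑ ω, p {ω} = 1 := by
  have := hp.eq_ite_sum Set.univ
  simpa [hp.2.2, Set.indicator_univ] using this.symm

/-- The probability function with singleton weights `w`. -/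
noncomputable def probOf (w : Ω → ℝ) : Set Ω → ℝ := fun A => ∑ ω, A.indicator w ω

lemma probOf_singleton (w : Ω → ℝ) (ω : Ω) : probOf w {ω} = w ω := by
  classical
  simp [probOf, Set.indicator_apply, Set.mem_singleton_iff]

lemma probOf_isProb {w : Ω → ℝ} (h0 : ∀ ω, 0 ≤ w ω) (h1 : ∑ ω, w ω = 1) :
    IsProbability (probOf w) := by
  refine ⟨fun A => Finset.sum_nonneg fun ω _ => Set.indicator_apply_nonneg fun _ => h0 ω,
    fun A B hAB => ?_, by simp [probOf, h1]⟩
  simp only [probOf, Set.indicator_union_of_disjoint hAB, Pi.add_apply]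
  exact Finset.sum_add_distrib

lemma ereal_sum_eq_bot (f : Ω → EReal) (a : Ω) (ha : f a = ⊥) : ∑ ω, f ω = ⊥ := by
  classical
  rw [← Finset.add_sum_erase Finset.univ f (Finset.mem_univ a), ha, EReal.bot_add]

lemma ereal_term_coe (c : ℝ) (x : EReal) (hx : x ≠ ⊤) (hb : c ≠ 0 → x ≠ ⊥) :
    (c : EReal) * x = ((c * x.toReal : ℝ) : EReal) := by
  by_cases hc : c = 0
  · simp [hc]
  · rw [← EReal.coe_toReal hx (hb hc), ← EReal.coe_mul, EReal.toReal_coe]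

lemma expScore_coe (p : Set Ω → ℝ) (w : Ω → ℝ) :
    expScore p (fun ω => (w ω : EReal)) = ((∑ ω, p {ω} * w ω : ℝ) : EReal) := by
  rw [expScore, show ((∑ ω, p {ω} * w ω : ℝ) : EReal)
      = ∑ ω, ((p {ω} * w ω : ℝ) : EReal) from
    map_sum (⟨⟨Real.toEReal, EReal.coe_zero⟩, EReal.coe_add⟩ : ℝ →+ EReal) _ _]
  exact Finset.sum_congr rfl fun ω _ => (EReal.coe_mul _ _).symm

end Aux

section Main
variable [Fintype Ω] [Nonempty Ω] {M : ℝ} {s : (Set Ω → ℝ) → Ω → EReal}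

lemma score_ne_top (hbound : ∀ c ω, s c ω ≤ (M : EReal)) (c : Set Ω → ℝ) (ω : Ω) :
    s c ω ≠ ⊤ :=
  ((lt_of_le_of_lt (hbound c ω) (EReal.coe_lt_top M))).ne

lemma score_ne_bot (H : ∀ p, IsProbability p → expScore p (s p) ≠ ⊥)
    {q : Set Ω → ℝ} (hq : IsProbability q) {ω : Ω} (hω : q {ω} ≠ 0) : s q ω ≠ ⊥ := by
  intro h
  refine H q hq ?_
  refine ereal_sum_eq_bot _ ω ?_
  rw [h]
  exact EReal.coe_mul_bot_of_pos (lt_of_le_of_ne (hq.1 {ω}) (Ne.symm hω))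

lemma expScore_eq_toReal (hbound : ∀ c ω, s c ω ≤ (M : EReal))
    (H : ∀ p, IsProbability p → expScore p (s p) ≠ ⊥)
    {q : Set Ω → ℝ} (hq : IsProbability q) :
    expScore q (s q) = ((∑ ω, q {ω} * (s q ω).toReal : ℝ) : EReal) := by
  rw [expScore, show ((∑ ω, q {ω} * (s q ω).toReal : ℝ) : EReal)
      = ∑ ω, ((q {ω} * (s q ω).toReal : ℝ) : EReal) from
    map_sum (⟨⟨Real.toEReal, EReal.coe_zero⟩, EReal.coe_add⟩ : ℝ →+ EReal) _ _]
  exact Finset.sum_congr rfl fun ω _ =>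
    ereal_term_coe _ _ (score_ne_top hbound q ω) (fun h0 => score_ne_bot H hq h0)

lemma finite_score_of_pos (hbound : ∀ c ω, s c ω ≤ (M : EReal))
    (H : ∀ p, IsProbability p → expScore p (s p) ≠ ⊥)
    {q : Set Ω → ℝ} (hq : IsProbability q) (hpos : ∀ ω, q {ω} ≠ 0) :
    s q = fun ω => (((s q ω).toReal : ℝ) : EReal) :=
  funext fun ω => (EReal.coe_toReal (score_ne_top hbound q ω) (score_ne_bot H hq (hpos ω))).symm

lemma halfspace_bound (hbound : ∀ c ω, s c ω ≤ (M : EReal))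
    (hproper : ∀ p c, IsProbability p → expScore p (s c) ≤ expScore p (s p))
    (H : ∀ p, IsProbability p → expScore p (s p) ≠ ⊥)
    {q : Set Ω → ℝ} (hq : IsProbability q) {x : Ω → ℝ}
    (hx : x ∈ closure (convexHull ℝ (finScores s))) :
    ∑ ω, q {ω} * x ω ≤ ∑ ω, q {ω} * (s q ω).toReal := by
  set r : ℝ := ∑ ω, q {ω} * (s q ω).toReal with hr
  set C : Set (Ω → ℝ) := {y | ∑ ω, q {ω} * y ω ≤ r} with hC
  have hCclosed : IsClosed C := by
    have : Continuous fun y : Ω → ℝ => ∑ ω, q {ω} * y ω :=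
      continuous_finset_sum _ fun ω _ => continuous_const.mul (continuous_apply ω)
    exact isClosed_le this continuous_const
  have hCconvex : Convex ℝ C := by
    intro y hy y' hy' a b ha hb hab
    simp only [hC, Set.mem_setOf_eq] at hy hy' ⊢
    have hexp : ∑ ω, q {ω} * (a • y + b • y') ω
        = a * (∑ ω, q {ω} * y ω) + b * (∑ ω, q {ω} * y' ω) := by
      rw [Finset.mul_sum, Finset.mul_sum, ← Finset.sum_add_distrib]
      refine Finset.sum_congr rfl fun ω _ => ?_
      simp only [Pi.add_apply, Pi.smul_apply, smul_eq_mul]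
      ring
    rw [hexp]
    calc a * (∑ ω, q {ω} * y ω) + b * (∑ ω, q {ω} * y' ω)
        ≤ a * r + b * r := add_le_add (mul_le_mul_of_nonneg_left hy ha)
          (mul_le_mul_of_nonneg_left hy' hb)
      _ = r := by rw [← add_mul, hab, one_mul]
  have hFC : finScores s ⊆ C := by
    rintro y ⟨c, hc, hsc⟩
    have h1 := hproper q c hq
    rw [hsc, expScore_coe, expScore_eq_toReal hbound H hq] at h1
    exact EReal.coe_le_coe_iff.mp h1
  exact closure_minimal (convexHull_min hFC hCconvex) hCclosed hx

end Main
section Big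
variable [Fintype Ω] [Nonempty Ω] {M : ℝ} {s : (Set Ω → ℝ) → Ω → EReal}

lemma densePart (hbound : ∀ c ω, s c ω ≤ (M : EReal)) (hcont : Continuous s)
    (hproper : ∀ p c, IsProbability p → expScore p (s c) ≤ expScore p (s p))
    (H : ∀ p, IsProbability p → expScore p (s p) ≠ ⊥) :
    DenseIn (finScores s) (posFacing (convexHull ℝ (finScores s))) := by
  rintro U hU ⟨z, hzU, hzfr, v, hv, hvz⟩
  suffices hzF : z ∈ finScores s by exact ⟨z, hzU, hzF⟩
  classical
  set V : ℝ := ∑ ω, v ω with hV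
  have hVpos : 0 < V := Finset.sum_pos (fun ω _ => hv ω) Finset.univ_nonempty
  set w : Ω → ℝ := fun ω => v ω / V with hw
  have hw0 : ∀ ω, 0 < w ω := fun ω => div_pos (hv ω) hVpos
  have hw1 : ∑ ω, w ω = 1 := by
    rw [hw, ← Finset.sum_div]; exact div_self hVpos.ne'
  have hsum_w : ∀ x : Ω → ℝ, ∑ ω, w ω * x ω = (∑ ω, v ω * x ω) / V := by
    intro x; rw [Finset.sum_div]
    exact Finset.sum_congr rfl fun ω _ => by rw [hw]; ring
  set P := probOf w with hPdef
  have hP : IsProbability P := probOf_isProb (fun ω => (hw0 ω).le) hw1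
  have hPs : ∀ ω, P {ω} = w ω := probOf_singleton w
  set g : Ω → ℝ := fun ω => (s P ω).toReal with hg
  have hsP : s P = fun ω => ((g ω : ℝ) : EReal) :=
    finite_score_of_pos hbound H hP (fun ω => by rw [hPs]; exact (hw0 ω).ne')
  have hgF : g ∈ finScores s := ⟨P, hP, hsP⟩
  have ha : ∑ ω, v ω * g ω ≤ ∑ ω, v ω * z ω := hvz g (subset_convexHull ℝ _ hgF)
  have hzcl : z ∈ closure (convexHull ℝ (finScores s)) := frontier_subset_closure hzfr
  have expand : ∀ (t : ℝ) (u x : Ω → ℝ),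
      ∑ ω, ((1-t) * w ω + t * u ω) * x ω
        = (1-t) * (∑ ω, w ω * x ω) + t * (∑ ω, u ω * x ω) := by
    intro t u x
    rw [Finset.mul_sum, Finset.mul_sum, ← Finset.sum_add_distrib]
    exact Finset.sum_congr rfl fun ω _ => by ring
  have hb : ∀ u : Ω → ℝ, (∀ ω, 0 < u ω) → (∑ ω, u ω = 1) →
      ∑ ω, u ω * z ω ≤ ∑ ω, u ω * g ω := by
    intro u hu hu1
    set Q : ℝ → Set Ω → ℝ := fun t => probOf (fun ω => (1-t) * w ω + t * u ω) with hQ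
    have hQcont : Continuous Q := by
      refine continuous_pi fun A => ?_
      refine continuous_finset_sum _ fun ω _ => ?_
      by_cases hωA : ω ∈ A
      · have hrw : (fun t : ℝ => A.indicator (fun ω => (1-t) * w ω + t * u ω) ω)
            = fun t : ℝ => (1-t) * w ω + t * u ω :=
          funext fun t => Set.indicator_of_mem hωA _
        rw [hrw]
        exact ((continuous_const.sub continuous_id).mul continuous_const).add
          (continuous_id.mul continuous_const)
      · have hrw : (fun t : ℝ => A.indicator (fun ω => (1-t) * w ω + t * u ω) ω)
            = fun _ : ℝ => (0:ℝ) := funext fun t => Set.indicator_of_notMem hωA _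
        rw [hrw]; exact continuous_const
    have hQ0 : Q 0 = P := by
      rw [hQ, hPdef]
      exact congrArg probOf (funext fun ω => by norm_num)
    have hQprob : ∀ t : ℝ, 0 ≤ t → t ≤ 1 → IsProbability (Q t) := by
      intro t ht0 ht1
      refine probOf_isProb (fun ω => add_nonneg
        (mul_nonneg (by linarith) (hw0 ω).le) (mul_nonneg ht0 (hu ω).le)) ?_
      rw [Finset.sum_add_distrib, ← Finset.mul_sum, ← Finset.mul_sum, hw1, hu1]; ring
    have hQpos : ∀ t : ℝ, 0 < t → t ≤ 1 → ∀ ω, (Q t) {ω} ≠ 0 := by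
      intro t ht0 ht1 ω
      show probOf (fun ω => (1-t) * w ω + t * u ω) {ω} ≠ 0
      rw [probOf_singleton]
      exact (add_pos_of_nonneg_of_pos (mul_nonneg (by linarith) (hw0 ω).le)
        (mul_pos ht0 (hu ω))).ne'
    have key : ∀ t : ℝ, 0 < t → t ≤ 1 →
        ∑ ω, u ω * z ω ≤ ∑ ω, u ω * (s (Q t) ω).toReal := by
      intro t ht0 ht1
      have hQt : IsProbability (Q t) := hQprob t ht0.le ht1
      have hsingle : ∀ ω, (Q t) {ω} = (1-t) * w ω + t * u ω := probOf_singleton _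
      set gt : Ω → ℝ := fun ω => (s (Q t) ω).toReal with hgt
      have h1 : ∑ ω, (Q t) {ω} * z ω ≤ ∑ ω, (Q t) {ω} * gt ω :=
        halfspace_bound hbound hproper H hQt hzcl
      have hgtF : gt ∈ finScores s :=
        ⟨Q t, hQt, finite_score_of_pos hbound H hQt (hQpos t ht0 ht1)⟩
      have h2 : ∑ ω, v ω * gt ω ≤ ∑ ω, v ω * z ω := hvz gt (subset_convexHull ℝ _ hgtF)
      have h2' : ∑ ω, w ω * gt ω ≤ ∑ ω, w ω * z ω := by
        rw [hsum_w, hsum_w]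
        exact div_le_div_of_nonneg_right h2 hVpos.le
      have h1' : (1-t) * (∑ ω, w ω * z ω) + t * (∑ ω, u ω * z ω)
          ≤ (1-t) * (∑ ω, w ω * gt ω) + t * (∑ ω, u ω * gt ω) := by
        have h1c := h1
        simp only [hsingle] at h1c
        rwa [expand, expand] at h1c
      have h3 : t * (∑ ω, u ω * z ω) ≤ t * (∑ ω, u ω * gt ω) := by
        have h4 := mul_le_mul_of_nonneg_left h2' (by linarith : (0:ℝ) ≤ 1 - t)
        linarith
      exact le_of_mul_le_mul_left h3 ht0
    have htn : Tendsto (fun n : ℕ => (1:ℝ)/(n+1)) atTop (𝓝 0) :=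
      tendsto_one_div_add_atTop_nhds_zero_nat
    have hQtn : Tendsto (fun n : ℕ => Q ((1:ℝ)/(n+1))) atTop (𝓝 P) := by
      have h := (hQcont.tendsto 0).comp htn
      rwa [hQ0] at h
    have hgconv : ∀ ω, Tendsto (fun n : ℕ => (s (Q ((1:ℝ)/(n+1))) ω).toReal) atTop
        (𝓝 (g ω)) := by
      intro ω
      have hfin : s P ω ≠ ⊤ := score_ne_top hbound P ω
      have hfin' : s P ω ≠ ⊥ := score_ne_bot H hP (by rw [hPs]; exact (hw0 ω).ne')
      exact (EReal.tendsto_toReal hfin hfin').comp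
        ((((continuous_apply ω).comp hcont).tendsto P).comp hQtn)
    have hlim : Tendsto (fun n : ℕ => ∑ ω, u ω * (s (Q ((1:ℝ)/(n+1))) ω).toReal) atTop
        (𝓝 (∑ ω, u ω * g ω)) :=
      tendsto_finset_sum _ fun ω _ => ((hgconv ω).const_mul _)
    refine ge_of_tendsto' hlim fun n => ?_
    have hn0 : (0:ℝ) < 1/(n+1) := by positivity
    have hn1 : (1:ℝ)/(n+1) ≤ 1 := by
      have h0 : (0:ℝ) ≤ n := Nat.cast_nonneg n
      rw [div_le_one (by linarith)]; linarith
    exact key _ hn0 hn1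
  have hb' : ∀ u : Ω → ℝ, (∀ ω, 0 < u ω) →
      ∑ ω, u ω * z ω ≤ ∑ ω, u ω * g ω := by
    intro u hu
    set T : ℝ := ∑ ω, u ω with hT
    have hTpos : 0 < T := Finset.sum_pos (fun ω _ => hu ω) Finset.univ_nonempty
    have h := hb (fun ω => u ω / T) (fun ω => div_pos (hu ω) hTpos)
      (by rw [← Finset.sum_div]; exact div_self hTpos.ne')
    have hdiv : ∀ x : Ω → ℝ, ∑ ω, (u ω / T) * x ω = (∑ ω, u ω * x ω) / T := by
      intro x; rw [Finset.sum_div]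
      exact Finset.sum_congr rfl fun ω _ => by ring
    rw [hdiv, hdiv] at h
    have h2 := mul_le_mul_of_nonneg_right h hTpos.le
    rwa [div_mul_cancel₀ _ hTpos.ne', div_mul_cancel₀ _ hTpos.ne'] at h2
  have hc : ∀ ω₀, z ω₀ ≤ g ω₀ := by
    intro ω₀
    have hk : ∀ k : ℕ, ∑ ω, (if ω = ω₀ then 1 else 1/(k+1:ℝ)) * z ω
        ≤ ∑ ω, (if ω = ω₀ then 1 else 1/(k+1:ℝ)) * g ω := by
      intro k
      refine hb' _ fun ω => ?_
      by_cases h : ω = ω₀ <;> simp only [h, if_pos, if_neg, if_true] <;> positivity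
    have hlim : ∀ x : Ω → ℝ, Tendsto
        (fun k : ℕ => ∑ ω, (if ω = ω₀ then 1 else 1/(k+1:ℝ)) * x ω) atTop (𝓝 (x ω₀)) := by
      intro x
      have h1 : Tendsto (fun k : ℕ => ∑ ω, (if ω = ω₀ then 1 else 1/(k+1:ℝ)) * x ω) atTop
          (𝓝 (∑ ω, (if ω = ω₀ then (1:ℝ) else 0) * x ω)) := by
        refine tendsto_finset_sum _ fun ω _ => ?_
        by_cases h : ω = ω₀
        · simp only [h, if_true]
          exact tendsto_const_nhds
        · simp only [if_neg h]
          simpa using (tendsto_one_div_add_atTop_nhds_zero_nat.mul_const (x ω))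
      have hval : ∑ ω, (if ω = ω₀ then (1:ℝ) else 0) * x ω = x ω₀ := by
        simp [ite_mul]
      rwa [hval] at h1
    exact le_of_tendsto_of_tendsto' (hlim z) (hlim g) hk
  have hd : ∀ ω, g ω = z ω := by
    have hnn : ∀ ω ∈ Finset.univ, 0 ≤ v ω * (g ω - z ω) := fun ω _ =>
      mul_nonneg (hv ω).le (by linarith [hc ω])
    have hsum : ∑ ω, v ω * (g ω - z ω) ≤ 0 := by
      have hx : ∑ ω, v ω * (g ω - z ω) = ∑ ω, v ω * g ω - ∑ ω, v ω * z ω := by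
        rw [← Finset.sum_sub_distrib]
        exact Finset.sum_congr rfl fun ω _ => by ring
      rw [hx]; linarith [ha]
    have h0 : ∑ ω, v ω * (g ω - z ω) = 0 :=
      le_antisymm hsum (Finset.sum_nonneg hnn)
    intro ω
    have hz := (Finset.sum_eq_zero_iff_of_nonneg hnn).mp h0 ω (Finset.mem_univ ω)
    rcases mul_eq_zero.mp hz with h | h
    · exact absurd h (hv ω).ne'
    · linarith
  have hzg : z = g := funext fun ω => (hd ω).symm
  rw [hzg]; exact hgF

lemma tendstoPart (hbound : ∀ c ω, s c ω ≤ (M : EReal)) (hcont : Continuous s)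
    (hproper : ∀ p c, IsProbability p → expScore p (s c) ≤ expScore p (s p))
    (H : ∀ p, IsProbability p → expScore p (s p) ≠ ⊥) :
    ∀ (pn : ℕ → Set Ω → ℝ) (p : Set Ω → ℝ),
      (∀ n, IsProbability (pn n)) → IsProbability p →
      (∀ ω : Ω, Tendsto (fun n => pn n {ω}) atTop (𝓝 (p {ω}))) →
      (∀ n, FiniteScore (s (pn n))) → ¬ FiniteScore (s p) →
      Tendsto (fun n => expScore (pn n) (s (pn n))) atTop (𝓝 (expScore p (s p))) := by
  intro pn p hpn hp hconv hfin _hnfin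
  classical
  have hconvA : ∀ A : Set Ω, Tendsto (fun n => pn n A) atTop (𝓝 (p A)) := by
    intro A
    rw [hp.eq_ite_sum A]
    refine Tendsto.congr (fun n => ((hpn n).eq_ite_sum A).symm)
      (tendsto_finset_sum _ fun ω _ => ?_)
    by_cases h : ω ∈ A
    · simp only [Set.indicator_of_mem h]
      exact hconv ω
    · simp only [Set.indicator_of_notMem h]
      exact tendsto_const_nhds
  have hpnp : Tendsto pn atTop (𝓝 p) := tendsto_pi_nhds.mpr hconvA
  have hsn : ∀ ω, Tendsto (fun n => s (pn n) ω) atTop (𝓝 (s p ω)) := fun ω =>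
    (((continuous_apply ω).comp hcont).tendsto p).comp hpnp
  set g : Ω → ℝ := fun ω => (s p ω).toReal with hg
  set gn : ℕ → Ω → ℝ := fun n ω => (s (pn n) ω).toReal with hgn
  set e : ℝ := ∑ ω, p {ω} * g ω with he
  set en : ℕ → ℝ := fun n => ∑ ω, pn n {ω} * gn n ω with hen
  have hE : expScore p (s p) = (e : EReal) := expScore_eq_toReal hbound H hp
  have hEn : ∀ n, expScore (pn n) (s (pn n)) = (en n : EReal) := fun n =>
    expScore_eq_toReal hbound H (hpn n)
  rw [hE]
  refine Tendsto.congr (fun n => (hEn n).symm) ?_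
  rw [EReal.tendsto_coe]
  have hp0 : ∀ ω, s p ω = ⊥ → p {ω} = 0 := by
    intro ω hω; by_contra h; exact score_ne_bot H hp h hω
  have hgprop : ∀ ω, s p ω ≠ ⊥ → Tendsto (fun n => gn n ω) atTop (𝓝 (g ω)) := fun ω hω =>
    (EReal.tendsto_toReal (score_ne_top hbound p ω) hω).comp (hsn ω)
  have hgnle : ∀ n ω, gn n ω ≤ M := by
    intro n ω
    have h := EReal.toReal_le_toReal (hbound (pn n) ω) ((hfin n ω).1) (EReal.coe_ne_top M)
    simpa using h
  set un : ℕ → ℝ :=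
    fun n => ∑ ω, (if s p ω = ⊥ then pn n {ω} * M else pn n {ω} * gn n ω) with hun
  have henun : ∀ n, en n ≤ un n := by
    intro n
    refine Finset.sum_le_sum fun ω _ => ?_
    by_cases h : s p ω = ⊥
    · rw [if_pos h]
      exact mul_le_mul_of_nonneg_left (hgnle n ω) ((hpn n).1 {ω})
    · rw [if_neg h]
  have hunlim : Tendsto un atTop (𝓝 e) := by
    rw [he]
    refine tendsto_finset_sum _ fun ω _ => ?_
    by_cases h : s p ω = ⊥
    · simp only [if_pos h]
      rw [hp0 ω h, zero_mul]
      have h2 := (hconv ω).mul_const M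
      rw [hp0 ω h, zero_mul] at h2
      exact h2
    · simp only [if_neg h]
      exact (hconv ω).mul (hgprop ω h)
  rw [tendsto_order]
  constructor
  · intro a halt
    have hclim : Tendsto (fun m => ∑ ω, p {ω} * gn m ω) atTop (𝓝 e) := by
      rw [he]
      refine tendsto_finset_sum _ fun ω _ => ?_
      by_cases h : p {ω} = 0
      · simp [h]
      · exact ((hgprop ω (score_ne_bot H hp h)).const_mul _)
    obtain ⟨m, hm⟩ := ((tendsto_order.mp hclim).1 a halt).exists
    have hblim : Tendsto (fun n => ∑ ω, pn n {ω} * gn m ω) atTop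
        (𝓝 (∑ ω, p {ω} * gn m ω)) :=
      tendsto_finset_sum _ fun ω _ => ((hconv ω).mul_const _)
    have hble : ∀ n, ∑ ω, pn n {ω} * gn m ω ≤ en n := by
      intro n
      have h1 := hproper (pn n) (pn m) (hpn n)
      have hsm : s (pn m) = fun ω => ((gn m ω : ℝ) : EReal) :=
        funext fun ω => (EReal.coe_toReal (hfin m ω).2 (hfin m ω).1).symm
      rw [hsm, expScore_coe, hEn n] at h1
      exact EReal.coe_le_coe_iff.mp h1
    filter_upwards [(tendsto_order.mp hblim).1 a hm] with n hn
    exact lt_of_lt_of_le hn (hble n)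
  · intro a hagt
    filter_upwards [(tendsto_order.mp hunlim).2 a hagt] with n hn
    exact lt_of_le_of_lt (henun n) hn

end Big

theorem stmt1 [Fintype Ω] [Nonempty Ω] (M : ℝ)
    (s : (Set Ω → ℝ) → Ω → EReal)
    (hbound : ∀ c ω, s c ω ≤ (M : EReal))
    -- `𝒞 = Set Ω → ℝ` carries the topology of pointwise convergence (the product
    -- topology) and `[-∞,M]^Ω` the product of the order topology on `EReal`:
    (hcont : Continuous s)
    (hproper : ∀ p c, IsProbability p → expScore p (s c) ≤ expScore p (s p))
    (hquasi : ∀ p c, IsProbability p → ¬ IsProbability c →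
      expScore p (s c) < expScore p (s p)) :
    (∃ p, IsProbability p ∧ expScore p (s p) = ⊥) ∨
      ((∀ (pn : ℕ → Set Ω → ℝ) (p : Set Ω → ℝ),
          (∀ n, IsProbability (pn n)) → IsProbability p →
          (∀ ω : Ω, Tendsto (fun n => pn n {ω}) atTop (𝓝 (p {ω}))) →
          (∀ n, FiniteScore (s (pn n))) → ¬ FiniteScore (s p) →
          Tendsto (fun n => expScore (pn n) (s (pn n))) atTop
            (𝓝 (expScore p (s p)))) ∧
        DenseIn (finScores s) (posFacing (convexHull ℝ (finScores s)))) := by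
  by_cases hbot : ∃ p, IsProbability p ∧ expScore p (s p) = ⊥
  · exact Or.inl hbot
  · push_neg at hbot
    exact Or.inr ⟨tendstoPart hbound hcont hproper hbot, densePart hbound hcont hproper hbot⟩
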